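/- arXiv:2404.12067 — 4 statements merged into one kernel-verified Lean document; each statement's English description precedes it below -/
import Mathlib

section
/- Let k : (0,∞) → [0,∞) be locally integrable with Laplace transform 𝒦(λ) finite and positive for every λ > 0, and suppose there is ℓ > 0 with λ𝒦(λ) → ℓ as λ → 0⁺ and λ𝒦(λ) ≥ ℓ for all λ > 0, and that for some ϱ ≥ 0 the function L(x) := x^{-ϱ} 𝒦(1/x) is slowly varying at infinity. Let G be a subordination density associated with 𝒦, and let u : (0,∞) → [0,∞) be measurable with ‖u‖_{1,ℓ} := ∫_0^∞ e^{-ℓτ} u(τ) dτ finite and nonzero. Then (1/t) ∫_0^t u^E(s) ds ∼ (‖u‖_{1,ℓ} / Γ(ϱ+1)) · t^{-1} 𝒦(1/t) as t → ∞. -/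
/-!
Since `λ𝒦(λ) → ℓ > 0`, the function `x ^ (-ϱ) 𝒦(1/x)` behaves like `ℓ x ^ (1 - ϱ)`, so slow
variation forces `ϱ = 1`, and then `Γ(ϱ + 1) = 1` and `t⁻¹ 𝒦(1/t) → ℓ`. By Fubini the Laplace
transform of `u^E` is `𝒦(λ) ∫ e^{-τλ𝒦(λ)} u(τ) dτ`; as `λ𝒦(λ) ≥ ℓ` tends to `ℓ`, dominated
convergence (with majorant `e^{-ℓτ} u(τ)`) gives `λ (𝓛u^E)(λ) → ℓ ‖u‖_{1,ℓ}` as `λ → 0⁺`, and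
Karamata's Tauberian theorem turns this into `t⁻¹ ∫_0^t u^E → ℓ ‖u‖_{1,ℓ}`.

Karamata's theorem is proved in the classical way: `λ ∫ h(e^{-λt}) e^{-λt} f(t) dt → A ∫_0^1 h`
holds for monomials `h` by rescaling `λ`, hence for polynomials, and by Weierstrass for continuous
`h`; sandwiching `x ↦ x⁻¹ 𝟙[e⁻¹, 1](x)` between continuous functions gives the Cesàro mean.
-/

open MeasureTheory Real Filter Set Topology

section Karamata

variable {f : ℝ → ℝ} {A : ℝ}

lemma integrableOn_comp_exp_mul {h : ℝ → ℝ} (hh : Continuous h) {l : ℝ} (hl : 0 < l)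
    (hf : IntegrableOn (fun t => exp (-l * t) * f t) (Ioi 0)) :
    IntegrableOn (fun t => h (exp (-l * t)) * (exp (-l * t) * f t)) (Ioi 0) := by
  obtain ⟨C, hC⟩ := (isCompact_Icc (a := (0 : ℝ)) (b := 1)).exists_bound_of_continuousOn
    hh.continuousOn
  refine hf.bdd_mul (c := C) (hh.comp (continuous_exp.comp
    (continuous_const.mul continuous_id))).aestronglyMeasurable ?_
  refine (ae_restrict_iff' measurableSet_Ioi).2 (ae_of_all _ fun t (ht : 0 < t) => hC _ ⟨?_, ?_⟩)
  · positivity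
  · exact exp_le_one_iff.2 (by nlinarith)

lemma tendsto_mul_integral_polynomial_comp_exp_mul
    (hfi : ∀ l, 0 < l → IntegrableOn (fun t => exp (-l * t) * f t) (Ioi 0))
    (hA : Tendsto (fun l => l * ∫ t in Ioi 0, exp (-l * t) * f t) (𝓝[>] 0) (𝓝 A))
    (p : Polynomial ℝ) :
    Tendsto (fun l => l * ∫ t in Ioi 0, p.eval (exp (-l * t)) * (exp (-l * t) * f t))
      (𝓝[>] 0) (𝓝 (A * ∫ x in (0 : ℝ)..1, p.eval x)) := by
  induction p using Polynomial.induction_on' with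
  | monomial n a =>
    have hn : (0 : ℝ) < n + 1 := by positivity
    have hmono : ∀ l t : ℝ, (Polynomial.monomial n a).eval (exp (-l * t)) * (exp (-l * t) * f t)
        = a * (exp (-((n + 1) * l) * t) * f t) := fun l t => by
      rw [Polynomial.eval_monomial, ← mul_assoc, mul_assoc a, ← pow_succ, ← exp_nat_mul]
      push_cast
      ring_nf
    have hint : ∫ x in (0 : ℝ)..1, (Polynomial.monomial n a).eval x = a / (n + 1) := by
      simp [Polynomial.eval_monomial, integral_pow, div_eq_mul_inv]
    simp only [hmono, integral_const_mul, hint]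
    have hscale : Tendsto ((n + 1 : ℝ) * ·) (𝓝[>] 0) (𝓝[>] 0) :=
      tendsto_iff_comap.2 (comap_mulLeft_nhdsGT_zero hn).ge
    convert ((hA.comp hscale).const_mul (a / (n + 1))) using 1
    · ext l; simp only [Function.comp]; field_simp
    · rw [mul_comm]
  | add p q hp hq =>
    have hadd : (fun l => (l * ∫ t in Ioi 0, p.eval (exp (-l * t)) * (exp (-l * t) * f t)) +
          l * ∫ t in Ioi 0, q.eval (exp (-l * t)) * (exp (-l * t) * f t)) =ᶠ[𝓝[>] 0]
        fun l => l * ∫ t in Ioi 0, (p + q).eval (exp (-l * t)) * (exp (-l * t) * f t) := by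
      filter_upwards [self_mem_nhdsWithin] with l (hl : 0 < l)
      rw [← mul_add, ← integral_add (integrableOn_comp_exp_mul p.continuous hl (hfi l hl))
        (integrableOn_comp_exp_mul q.continuous hl (hfi l hl))]
      simp only [Polynomial.eval_add, add_mul]
    have hint : ∫ x in (0 : ℝ)..1, (p + q).eval x =
        (∫ x in (0 : ℝ)..1, p.eval x) + ∫ x in (0 : ℝ)..1, q.eval x := by
      simp only [Polynomial.eval_add]
      exact intervalIntegral.integral_add (p.continuous.intervalIntegrable _ _)
        (q.continuous.intervalIntegrable _ _)
    rw [hint, mul_add]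
    exact (hp.add hq).congr' hadd

lemma abs_mul_integral_comp_exp_mul_sub_le (hf0 : ∀ t ∈ Ioi (0 : ℝ), 0 ≤ f t)
    (hfi : ∀ l, 0 < l → IntegrableOn (fun t => exp (-l * t) * f t) (Ioi 0))
    {h g : ℝ → ℝ} (hh : Continuous h) (hg : Continuous g) {η : ℝ}
    (hhg : ∀ x ∈ Icc (0 : ℝ) 1, |h x - g x| ≤ η) {l : ℝ} (hl : 0 < l) :
    |(l * ∫ t in Ioi 0, h (exp (-l * t)) * (exp (-l * t) * f t)) -
        l * ∫ t in Ioi 0, g (exp (-l * t)) * (exp (-l * t) * f t)| ≤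
      η * (l * ∫ t in Ioi 0, exp (-l * t) * f t) := by
  rw [← mul_sub, ← integral_sub (integrableOn_comp_exp_mul hh hl (hfi l hl))
    (integrableOn_comp_exp_mul hg hl (hfi l hl)), abs_mul, abs_of_pos hl, mul_left_comm,
    ← integral_const_mul, ← Real.norm_eq_abs]
  refine mul_le_mul_of_nonneg_left (norm_integral_le_of_norm_le ((hfi l hl).const_mul η)
    ((ae_restrict_iff' measurableSet_Ioi).2 (ae_of_all _ fun t (ht : 0 < t) => ?_))) hl.le
  have hx : exp (-l * t) ∈ Icc (0 : ℝ) 1 := ⟨(exp_pos _).le, exp_le_one_iff.2 (by nlinarith)⟩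
  rw [← sub_mul, norm_mul, norm_of_nonneg (mul_nonneg (exp_pos _).le (hf0 t ht))]
  exact mul_le_mul_of_nonneg_right (hhg _ hx) (mul_nonneg (exp_pos _).le (hf0 t ht))

lemma tendsto_mul_integral_comp_exp_mul (hf0 : ∀ t ∈ Ioi (0 : ℝ), 0 ≤ f t)
    (hfi : ∀ l, 0 < l → IntegrableOn (fun t => exp (-l * t) * f t) (Ioi 0))
    (hA : Tendsto (fun l => l * ∫ t in Ioi 0, exp (-l * t) * f t) (𝓝[>] 0) (𝓝 A))
    {h : ℝ → ℝ} (hh : Continuous h) :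
    Tendsto (fun l => l * ∫ t in Ioi 0, h (exp (-l * t)) * (exp (-l * t) * f t))
      (𝓝[>] 0) (𝓝 (A * ∫ x in (0 : ℝ)..1, h x)) := by
  rw [Metric.tendsto_nhds]
  intro ε hε
  set η := ε / (2 * |A| + 2)
  have hη : 0 < η := by positivity
  obtain ⟨p, hp⟩ := exists_polynomial_near_of_continuousOn 0 1 h hh.continuousOn η hη
  have hhp : ∀ x ∈ Icc (0 : ℝ) 1, |h x - p.eval x| ≤ η := fun x hx => by
    rw [abs_sub_comm]; exact (hp x hx).le
  have hIp : |(∫ x in (0 : ℝ)..1, p.eval x) - ∫ x in (0 : ℝ)..1, h x| ≤ η := by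
    rw [← intervalIntegral.integral_sub (p.continuous.intervalIntegrable _ _)
      (hh.intervalIntegrable _ _)]
    simpa using intervalIntegral.norm_integral_le_of_norm_le_const (a := 0) (b := 1)
      (f := fun x => p.eval x - h x) (C := η) fun x hx =>
        (hp x (Ioc_subset_Icc_self (by rwa [uIoc_of_le zero_le_one] at hx))).le
  filter_upwards [self_mem_nhdsWithin,
    hA.eventually (gt_mem_nhds ((le_abs_self A).trans_lt (lt_add_one _))),
    Metric.tendsto_nhds.1 (tendsto_mul_integral_polynomial_comp_exp_mul hfi hA p) η hη]
    with l (hl : 0 < l) hL hPp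
  rw [Real.dist_eq] at hPp ⊢
  have hA' : |(A * ∫ x in (0 : ℝ)..1, p.eval x) - A * ∫ x in (0 : ℝ)..1, h x| ≤ |A| * η := by
    rw [← mul_sub, abs_mul]; exact mul_le_mul_of_nonneg_left hIp (abs_nonneg A)
  have hhp' := abs_mul_integral_comp_exp_mul_sub_le hf0 hfi hh p.continuous hhp hl
  have hηε : η * (2 * |A| + 2) = ε := div_mul_cancel₀ _ (by positivity)
  calc _ ≤ η * (l * ∫ t in Ioi 0, exp (-l * t) * f t) + η + |A| * η := by
        linarith [abs_sub_le (l * ∫ t in Ioi 0, h (exp (-l * t)) * (exp (-l * t) * f t))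
          (l * ∫ t in Ioi 0, p.eval (exp (-l * t)) * (exp (-l * t) * f t))
          (A * ∫ x in (0 : ℝ)..1, h x),
          abs_sub_le (l * ∫ t in Ioi 0, p.eval (exp (-l * t)) * (exp (-l * t) * f t))
          (A * ∫ x in (0 : ℝ)..1, p.eval x) (A * ∫ x in (0 : ℝ)..1, h x)]
    _ < η * (|A| + 1) + η + |A| * η := by gcongr
    _ = ε := by linarith

noncomputable def ramp (r δ x : ℝ) : ℝ := min 1 (max 0 ((x - r) / δ))

lemma continuous_ramp (r δ : ℝ) : Continuous (ramp r δ) := by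
  unfold ramp; fun_prop

lemma ramp_nonneg (r δ x : ℝ) : 0 ≤ ramp r δ x := le_min zero_le_one (le_max_left _ _)

lemma ramp_le_one (r δ x : ℝ) : ramp r δ x ≤ 1 := min_le_left _ _

lemma ramp_of_le {r δ x : ℝ} (hδ : 0 < δ) (hx : x ≤ r) : ramp r δ x = 0 := by
  rw [ramp, max_eq_left (div_nonpos_of_nonpos_of_nonneg (by linarith) hδ.le),
    min_eq_right zero_le_one]

lemma ramp_of_ge {r δ x : ℝ} (hδ : 0 < δ) (hx : r + δ ≤ x) : ramp r δ x = 1 := by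
  have h1 : 1 ≤ (x - r) / δ := (le_div_iff₀ hδ).2 (by linarith)
  rw [ramp, max_eq_right (zero_le_one.trans h1), min_eq_left h1]

/-- Continuous approximation of `x ↦ x⁻¹ 𝟙[e⁻¹, 1](x)`, from below for `r = e⁻¹` and from
above for `r = e⁻¹ - δ`. At `x = exp (-l t)` the function `x ↦ x 𝟙[e⁻¹, 1](x)` is `𝟙[0, l⁻¹](t)`. -/
noncomputable def karamataBump (r δ x : ℝ) : ℝ := ramp r δ x / max x (exp (-1))

lemma continuous_karamataBump (r δ : ℝ) : Continuous (karamataBump r δ) :=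
  (continuous_ramp r δ).div (continuous_id.max continuous_const)
    fun x => ((exp_pos _).trans_le (le_max_right x _)).ne'

lemma karamataBump_nonneg (r δ x : ℝ) : 0 ≤ karamataBump r δ x :=
  div_nonneg (ramp_nonneg r δ x) ((exp_pos _).le.trans (le_max_right _ _))

lemma karamataBump_le_exp_one (r δ x : ℝ) : karamataBump r δ x ≤ exp 1 := by
  rw [karamataBump, div_le_iff₀ ((exp_pos _).trans_le (le_max_right _ _))]
  calc ramp r δ x ≤ exp 1 * exp (-1) := by
        rw [← exp_add, add_neg_cancel, exp_zero]; exact ramp_le_one r δ x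
    _ ≤ exp 1 * max x (exp (-1)) := by gcongr; exact le_max_right _ _

lemma mul_karamataBump_le_one (r δ : ℝ) {x : ℝ} (hx : 0 ≤ x) : x * karamataBump r δ x ≤ 1 := by
  rw [karamataBump, mul_div_assoc', div_le_one ((exp_pos _).trans_le (le_max_right _ _))]
  exact (mul_le_of_le_one_right hx (ramp_le_one r δ x)).trans (le_max_left _ _)

lemma karamataBump_of_le {r δ x : ℝ} (hδ : 0 < δ) (hx : x ≤ r) : karamataBump r δ x = 0 := by
  rw [karamataBump, ramp_of_le hδ hx, zero_div]

lemma karamataBump_of_ge {r δ x : ℝ} (hδ : 0 < δ) (hx : r + δ ≤ x) (he : exp (-1) ≤ x) :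
    karamataBump r δ x = x⁻¹ := by
  rw [karamataBump, ramp_of_ge hδ hx, max_eq_left he, one_div]

lemma integral_karamataBump {r δ : ℝ} (hr : 0 ≤ r) (hδ : 0 < δ) (he : exp (-1) ≤ r + δ)
    (h1 : r + δ ≤ 1) :
    ∫ x in (0 : ℝ)..1, karamataBump r δ x =
      (∫ x in r..r + δ, karamataBump r δ x) - log (r + δ) := by
  have hint : ∀ a b : ℝ, IntervalIntegrable (karamataBump r δ) volume a b :=
    fun a b => (continuous_karamataBump r δ).intervalIntegrable a b
  have hleft : ∫ x in (0 : ℝ)..r, karamataBump r δ x = 0 := by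
    rw [intervalIntegral.integral_congr (g := fun _ => 0) fun x hx =>
      karamataBump_of_le hδ (by rw [uIcc_of_le hr] at hx; exact hx.2)]
    simp
  have hright : ∫ x in r + δ..1, karamataBump r δ x = -log (r + δ) := by
    rw [intervalIntegral.integral_congr (g := fun x => x⁻¹) fun x hx => by
      rw [uIcc_of_le h1] at hx; exact karamataBump_of_ge hδ hx.1 (he.trans hx.1),
      integral_inv_of_pos (by linarith) one_pos, one_div, log_inv]
  rw [← intervalIntegral.integral_add_adjacent_intervals (hint 0 r) (hint r 1),
    ← intervalIntegral.integral_add_adjacent_intervals (hint r (r + δ)) (hint (r + δ) 1),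
    hleft, hright]
  ring

lemma neg_log_le_integral_karamataBump {δ : ℝ} (hδ : 0 < δ) (h1 : exp (-1) + δ ≤ 1) :
    -log (exp (-1) + δ) ≤ ∫ x in (0 : ℝ)..1, karamataBump (exp (-1)) δ x := by
  rw [integral_karamataBump (exp_pos _).le hδ (by linarith) h1]
  linarith [intervalIntegral.integral_nonneg (μ := volume)
    (by linarith : exp (-1) ≤ exp (-1) + δ) fun x _ => karamataBump_nonneg (exp (-1)) δ x]

lemma integral_karamataBump_le {δ : ℝ} (hδ : 0 < δ) (he : δ ≤ exp (-1)) :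
    ∫ x in (0 : ℝ)..1, karamataBump (exp (-1) - δ) δ x ≤ 1 + exp 1 * δ := by
  have hmid : ∫ x in exp (-1) - δ..exp (-1), karamataBump (exp (-1) - δ) δ x ≤ exp 1 * δ := by
    simpa [mul_comm] using intervalIntegral.integral_mono_on (a := exp (-1) - δ) (b := exp (-1))
      (by linarith) ((continuous_karamataBump _ δ).intervalIntegrable _ _)
      (intervalIntegrable_const (μ := volume))
      fun x _ => karamataBump_le_exp_one (exp (-1) - δ) δ x
  rw [integral_karamataBump (by linarith) hδ (by linarith)
    (by linarith [exp_le_one_iff.2 (by norm_num : (-1 : ℝ) ≤ 0)]), sub_add_cancel, log_exp]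
  linarith

lemma exp_neg_one_le_exp_neg_mul_iff {l t : ℝ} (hl : 0 < l) :
    exp (-1) ≤ exp (-l * t) ↔ t ≤ l⁻¹ := by
  rw [exp_le_exp, neg_mul, neg_le_neg_iff, ← le_div_iff₀' hl, one_div]

lemma integrableOn_Ioc_of_integrableOn_exp_mul {l : ℝ} (T : ℝ)
    (hf : IntegrableOn (fun t => exp (-l * t) * f t) (Ioi 0)) : IntegrableOn f (Ioc 0 T) := by
  obtain ⟨C, hC⟩ := (isCompact_Icc (a := (0 : ℝ)) (b := T)).exists_bound_of_continuousOn
    (by fun_prop : Continuous fun t => exp (l * t)).continuousOn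
  refine ((hf.mono_set Ioc_subset_Ioi_self).bdd_mul (c := C)
    (by fun_prop : Continuous fun t => exp (l * t)).aestronglyMeasurable
    ((ae_restrict_iff' measurableSet_Ioc).2 (ae_of_all _ fun t ht =>
      hC t (Ioc_subset_Icc_self ht)))).congr (ae_of_all _ fun t => ?_)
  change exp (l * t) * (exp (-l * t) * f t) = f t
  rw [← mul_assoc, ← exp_add, neg_mul, add_neg_cancel, exp_zero, one_mul]

lemma integrableOn_indicator_Iic_of_integrableOn_exp_mul {l : ℝ} (T : ℝ)
    (hf : IntegrableOn (fun t => exp (-l * t) * f t) (Ioi 0)) :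
    IntegrableOn ((Iic T).indicator f) (Ioi 0) := by
  rw [IntegrableOn, integrable_indicator_iff measurableSet_Iic, IntegrableOn,
    Measure.restrict_restrict measurableSet_Iic, inter_comm, Ioi_inter_Iic]
  exact integrableOn_Ioc_of_integrableOn_exp_mul T hf

lemma intervalIntegral_eq_integral_indicator (T : ℝ) (hT : 0 ≤ T) :
    ∫ t in (0 : ℝ)..T, f t = ∫ t in Ioi 0, (Iic T).indicator f t := by
  rw [setIntegral_indicator measurableSet_Iic, Ioi_inter_Iic, intervalIntegral.integral_of_le hT]

lemma integral_karamataBump_lower_le (hf0 : ∀ t ∈ Ioi (0 : ℝ), 0 ≤ f t)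
    (hfi : ∀ l, 0 < l → IntegrableOn (fun t => exp (-l * t) * f t) (Ioi 0))
    {δ l : ℝ} (hδ : 0 < δ) (hl : 0 < l) :
    ∫ t in Ioi 0, karamataBump (exp (-1)) δ (exp (-l * t)) * (exp (-l * t) * f t) ≤
      ∫ t in (0 : ℝ)..l⁻¹, f t := by
  rw [intervalIntegral_eq_integral_indicator _ (inv_pos.2 hl).le]
  refine setIntegral_mono_on
    (integrableOn_comp_exp_mul (continuous_karamataBump _ δ) hl (hfi l hl))
    ?_ measurableSet_Ioi fun t ht => ?_
  · exact integrableOn_indicator_Iic_of_integrableOn_exp_mul _ (hfi l hl)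
  · by_cases htl : t ≤ l⁻¹
    · rw [indicator_of_mem (mem_Iic.2 htl), ← mul_assoc, mul_comm (karamataBump _ _ _)]
      exact mul_le_of_le_one_left (hf0 t ht) (mul_karamataBump_le_one _ _ (exp_pos _).le)
    · rw [indicator_of_notMem (by simpa using htl), karamataBump_of_le hδ
        (not_le.1 ((exp_neg_one_le_exp_neg_mul_iff hl).not.2 htl)).le, zero_mul]

lemma integral_le_integral_karamataBump_upper (hf0 : ∀ t ∈ Ioi (0 : ℝ), 0 ≤ f t)
    (hfi : ∀ l, 0 < l → IntegrableOn (fun t => exp (-l * t) * f t) (Ioi 0))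
    {δ l : ℝ} (hδ : 0 < δ) (hl : 0 < l) :
    ∫ t in (0 : ℝ)..l⁻¹, f t ≤
      ∫ t in Ioi 0, karamataBump (exp (-1) - δ) δ (exp (-l * t)) * (exp (-l * t) * f t) := by
  rw [intervalIntegral_eq_integral_indicator _ (inv_pos.2 hl).le]
  refine setIntegral_mono_on ?_
    (integrableOn_comp_exp_mul (continuous_karamataBump _ δ) hl (hfi l hl))
    measurableSet_Ioi fun t ht => ?_
  · exact integrableOn_indicator_Iic_of_integrableOn_exp_mul _ (hfi l hl)
  · by_cases htl : t ≤ l⁻¹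
    · have he := (exp_neg_one_le_exp_neg_mul_iff hl).2 htl
      rw [indicator_of_mem (mem_Iic.2 htl), ← mul_assoc, mul_comm (karamataBump _ _ _),
        karamataBump_of_ge hδ (by linarith) he, mul_inv_cancel₀ (exp_pos _).ne', one_mul]
    · rw [indicator_of_notMem (by simpa using htl)]
      exact mul_nonneg (karamataBump_nonneg _ _ _) (mul_nonneg (exp_pos _).le (hf0 t ht))

lemma eventually_lt_mul_intervalIntegral (hf0 : ∀ t ∈ Ioi (0 : ℝ), 0 ≤ f t)
    (hfi : ∀ l, 0 < l → IntegrableOn (fun t => exp (-l * t) * f t) (Ioi 0))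
    (hA : Tendsto (fun l => l * ∫ t in Ioi 0, exp (-l * t) * f t) (𝓝[>] 0) (𝓝 A))
    (hA0 : 0 ≤ A) {b : ℝ} (hb : b < A) :
    ∀ᶠ l in 𝓝[>] 0, b < l * ∫ t in (0 : ℝ)..l⁻¹, f t := by
  have hlog : Tendsto (fun δ => A * -log (exp (-1) + δ)) (𝓝[>] 0) (𝓝 A) := by
    have h : ContinuousAt (fun δ => A * -log (exp (-1) + δ)) 0 := by
      fun_prop (disch := simp)
    simpa using h.tendsto.mono_left (nhdsWithin_le_nhds (a := (0 : ℝ)))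
  obtain ⟨δ, hbδ, hδ, hδ1⟩ := ((hlog.eventually (lt_mem_nhds hb)).and
    (Ioo_mem_nhdsGT (sub_pos.2 (exp_lt_one_iff.2 (by norm_num : (-1 : ℝ) < 0))))).exists
  have hlim := tendsto_mul_integral_comp_exp_mul hf0 hfi hA
    (continuous_karamataBump (exp (-1)) δ)
  have hI := mul_le_mul_of_nonneg_left
    (neg_log_le_integral_karamataBump hδ (by linarith)) hA0
  filter_upwards [self_mem_nhdsWithin, hlim.eventually (lt_mem_nhds (hbδ.trans_le hI))]
    with l (hl : 0 < l) hbl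
  exact hbl.trans_le (mul_le_mul_of_nonneg_left (integral_karamataBump_lower_le hf0 hfi hδ hl)
    hl.le)

lemma eventually_mul_intervalIntegral_lt (hf0 : ∀ t ∈ Ioi (0 : ℝ), 0 ≤ f t)
    (hfi : ∀ l, 0 < l → IntegrableOn (fun t => exp (-l * t) * f t) (Ioi 0))
    (hA : Tendsto (fun l => l * ∫ t in Ioi 0, exp (-l * t) * f t) (𝓝[>] 0) (𝓝 A))
    (hA0 : 0 ≤ A) {b : ℝ} (hb : A < b) :
    ∀ᶠ l in 𝓝[>] 0, l * ∫ t in (0 : ℝ)..l⁻¹, f t < b := by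
  have hlin : Tendsto (fun δ => A * (1 + exp 1 * δ)) (𝓝[>] 0) (𝓝 A) := by
    have h : Continuous fun δ => A * (1 + exp 1 * δ) := by fun_prop
    simpa using (h.tendsto 0).mono_left nhdsWithin_le_nhds
  obtain ⟨δ, hbδ, hδ, hδe⟩ := ((hlin.eventually (gt_mem_nhds hb)).and
    (Ioo_mem_nhdsGT (exp_pos (-1)))).exists
  have hlim := tendsto_mul_integral_comp_exp_mul hf0 hfi hA
    (continuous_karamataBump (exp (-1) - δ) δ)
  have hI := mul_le_mul_of_nonneg_left (integral_karamataBump_le hδ hδe.le) hA0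
  filter_upwards [self_mem_nhdsWithin, hlim.eventually (gt_mem_nhds (hI.trans_lt hbδ))]
    with l (hl : 0 < l) hbl
  exact (mul_le_mul_of_nonneg_left (integral_le_integral_karamataBump_upper hf0 hfi hδ hl)
    hl.le).trans_lt hbl

/-- Karamata's Tauberian theorem, for index `1`. -/
theorem tendsto_inv_mul_integral_of_tendsto_mul_laplace (hf0 : ∀ t ∈ Ioi (0 : ℝ), 0 ≤ f t)
    (hfi : ∀ l, 0 < l → IntegrableOn (fun t => exp (-l * t) * f t) (Ioi 0))
    (hA : Tendsto (fun l => l * ∫ t in Ioi 0, exp (-l * t) * f t) (𝓝[>] 0) (𝓝 A)) :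
    Tendsto (fun t => t⁻¹ * ∫ s in (0 : ℝ)..t, f s) atTop (𝓝 A) := by
  have hA0 : 0 ≤ A := ge_of_tendsto hA <| eventually_nhdsWithin_of_forall fun l (hl : 0 < l) =>
    mul_nonneg hl.le <| setIntegral_nonneg measurableSet_Ioi fun t ht =>
      mul_nonneg (exp_pos _).le (hf0 t ht)
  have h : Tendsto (fun l => l * ∫ t in (0 : ℝ)..l⁻¹, f t) (𝓝[>] 0) (𝓝 A) :=
    tendsto_order.2 ⟨fun _ hb => eventually_lt_mul_intervalIntegral hf0 hfi hA hA0 hb,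
      fun _ hb => eventually_mul_intervalIntegral_lt hf0 hfi hA hA0 hb⟩
  refine (h.comp tendsto_inv_atTop_nhdsGT_zero).congr fun t => ?_
  simp only [Function.comp, inv_inv]

end Karamata

noncomputable def subordinate (G : ℝ → ℝ → ℝ) (u : ℝ → ℝ) (t : ℝ) : ℝ :=
  ∫ τ in Ioi 0, u τ * G t τ

section Subordination

variable {G : ℝ → ℝ → ℝ} {u : ℝ → ℝ}

lemma subordinate_nonneg (hG_nonneg : ∀ t ∈ Ioi (0 : ℝ), ∀ τ ∈ Ioi (0 : ℝ), 0 ≤ G t τ)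
    (hu_nonneg : ∀ τ ∈ Ioi (0 : ℝ), 0 ≤ u τ) : ∀ t ∈ Ioi (0 : ℝ), 0 ≤ subordinate G u t :=
  fun t ht => setIntegral_nonneg measurableSet_Ioi fun τ hτ =>
    mul_nonneg (hu_nonneg τ hτ) (hG_nonneg t ht τ hτ)

lemma integrableOn_exp_neg_mul_of_le {ℓ m : ℝ} (h : ℓ ≤ m)
    (hu : IntegrableOn (fun τ => exp (-ℓ * τ) * u τ) (Ioi 0)) :
    IntegrableOn (fun τ => exp (-m * τ) * u τ) (Ioi 0) := by
  refine (hu.bdd_mul (c := 1)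
    (by fun_prop : Continuous fun τ => exp (-(m - ℓ) * τ)).aestronglyMeasurable
    ((ae_restrict_iff' measurableSet_Ioi).2 (ae_of_all _ fun τ (hτ : 0 < τ) => ?_))).congr
    (ae_of_all _ fun τ => ?_)
  · rw [norm_of_nonneg (exp_pos _).le, exp_le_one_iff]
    nlinarith
  · change exp (-(m - ℓ) * τ) * (exp (-ℓ * τ) * u τ) = exp (-m * τ) * u τ
    rw [← mul_assoc, ← exp_add]
    ring_nf

lemma continuousWithinAt_integral_exp_neg_mul {ℓ : ℝ}
    (hu : IntegrableOn (fun τ => exp (-ℓ * τ) * u τ) (Ioi 0)) :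
    ContinuousWithinAt (fun m => ∫ τ in Ioi 0, exp (-m * τ) * u τ) (Ici ℓ) ℓ := by
  refine continuousWithinAt_of_dominated (bound := fun τ => ‖exp (-ℓ * τ) * u τ‖)
    ?_ ?_ hu.norm (ae_of_all _ fun τ => by fun_prop)
  · filter_upwards [self_mem_nhdsWithin] with m (hm : ℓ ≤ m)
    exact (integrableOn_exp_neg_mul_of_le hm hu).aestronglyMeasurable
  · filter_upwards [self_mem_nhdsWithin] with m (hm : ℓ ≤ m)
    refine (ae_restrict_iff' measurableSet_Ioi).2 (ae_of_all _ fun τ (hτ : 0 < τ) => ?_)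
    rw [norm_mul, norm_mul, norm_of_nonneg (exp_pos _).le, norm_of_nonneg (exp_pos _).le]
    exact mul_le_mul_of_nonneg_right (exp_le_exp.2 (by nlinarith)) (norm_nonneg _)

lemma integrable_exp_mul_subordination {l κ : ℝ} (hκ : κ ≠ 0)
    (hG_meas : Measurable (Function.uncurry G))
    (hG_nonneg : ∀ t ∈ Ioi (0 : ℝ), ∀ τ ∈ Ioi (0 : ℝ), 0 ≤ G t τ)
    (hGl : ∀ τ, 0 < τ → ∫ t in Ioi 0, exp (-l * t) * G t τ = κ * exp (-(τ * l * κ)))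
    (hu_meas : Measurable u) (hu_nonneg : ∀ τ ∈ Ioi (0 : ℝ), 0 ≤ u τ)
    (hu : IntegrableOn (fun τ => exp (-(l * κ) * τ) * u τ) (Ioi 0)) :
    Integrable (fun p : ℝ × ℝ => exp (-l * p.2) * (u p.1 * G p.2 p.1))
      ((volume.restrict (Ioi 0)).prod (volume.restrict (Ioi 0))) := by
  have hmeas : Measurable fun p : ℝ × ℝ => exp (-l * p.2) * (u p.1 * G p.2 p.1) :=
    (measurable_exp.comp (measurable_snd.const_mul (-l))).mul
      ((hu_meas.comp measurable_fst).mul (hG_meas.comp measurable_swap))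
  have hslice : ∀ τ, 0 < τ →
      (fun t => exp (-l * t) * (u τ * G t τ)) = fun t => u τ * (exp (-l * t) * G t τ) :=
    fun τ _ => funext fun t => by ring
  rw [integrable_prod_iff hmeas.aestronglyMeasurable]
  constructor
  · refine (ae_restrict_iff' measurableSet_Ioi).2 (ae_of_all _ fun τ (hτ : 0 < τ) => ?_)
    have hGint : IntegrableOn (fun t => exp (-l * t) * G t τ) (Ioi 0) :=
      Integrable.of_integral_ne_zero (by rw [hGl τ hτ]; exact mul_ne_zero hκ (exp_pos _).ne')
    rw [hslice τ hτ]
    exact hGint.const_mul (u τ)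
  · refine (hu.const_mul κ).congr ((ae_restrict_iff' measurableSet_Ioi).2
      (ae_of_all _ fun τ (hτ : 0 < τ) => ?_))
    have hnorm : ∫ t in Ioi 0, ‖exp (-l * t) * (u τ * G t τ)‖ =
        ∫ t in Ioi 0, exp (-l * t) * (u τ * G t τ) :=
      setIntegral_congr_fun measurableSet_Ioi fun t (ht : 0 < t) => norm_of_nonneg <|
        mul_nonneg (exp_pos _).le (mul_nonneg (hu_nonneg τ hτ) (hG_nonneg t ht τ hτ))
    dsimp only
    rw [hnorm, hslice τ hτ, integral_const_mul, hGl τ hτ]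
    ring_nf

lemma integrableOn_exp_mul_subordinate {l : ℝ}
    (h : Integrable (fun p : ℝ × ℝ => exp (-l * p.2) * (u p.1 * G p.2 p.1))
      ((volume.restrict (Ioi 0)).prod (volume.restrict (Ioi 0)))) :
    IntegrableOn (fun t => exp (-l * t) * subordinate G u t) (Ioi 0) :=
  h.swap.integral_prod_left.congr (ae_of_all _ fun _ => by
    simp only [Function.comp_apply, Prod.fst_swap, Prod.snd_swap, subordinate, integral_const_mul])

lemma integral_exp_mul_subordinate {l κ : ℝ}
    (hGl : ∀ τ, 0 < τ → ∫ t in Ioi 0, exp (-l * t) * G t τ = κ * exp (-(τ * l * κ)))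
    (h : Integrable (fun p : ℝ × ℝ => exp (-l * p.2) * (u p.1 * G p.2 p.1))
      ((volume.restrict (Ioi 0)).prod (volume.restrict (Ioi 0)))) :
    ∫ t in Ioi 0, exp (-l * t) * subordinate G u t =
      κ * ∫ τ in Ioi 0, exp (-(l * κ) * τ) * u τ := by
  calc ∫ t in Ioi 0, exp (-l * t) * subordinate G u t
      = ∫ t in Ioi 0, ∫ τ in Ioi 0, exp (-l * t) * (u τ * G t τ) := by
        simp only [subordinate, integral_const_mul]
    _ = ∫ τ in Ioi 0, u τ * ∫ t in Ioi 0, exp (-l * t) * G t τ := by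
        rw [← integral_integral_swap h]
        simp only [mul_left_comm (exp _), integral_const_mul]
    _ = ∫ τ in Ioi 0, κ * (exp (-(l * κ) * τ) * u τ) :=
        setIntegral_congr_fun measurableSet_Ioi fun τ (hτ : 0 < τ) => by
          rw [hGl τ hτ]; ring_nf
    _ = κ * ∫ τ in Ioi 0, exp (-(l * κ) * τ) * u τ := integral_const_mul _ _

end Subordination

lemma rpow_neg_mul_one_div_eq {ϱ y : ℝ} (hy : 0 < y) (K : ℝ → ℝ) :
    y ^ (-ϱ) * K (1 / y) = y ^ (1 - ϱ) * (y⁻¹ * K y⁻¹) := by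
  rw [sub_eq_add_neg, rpow_add hy, rpow_one, one_div]
  field_simp

lemma eq_one_of_tendsto_mul_of_tendsto_ratio {K : ℝ → ℝ} {ϱ ℓ c : ℝ} (hℓ : ℓ ≠ 0) (hc : 0 < c)
    (hc1 : c ≠ 1) (hlim : Tendsto (fun l => l * K l) (𝓝[>] 0) (𝓝 ℓ))
    (hSV : Tendsto (fun x => ((c * x) ^ (-ϱ) * K (1 / (c * x))) / (x ^ (-ϱ) * K (1 / x)))
      atTop (𝓝 1)) : ϱ = 1 := by
  have hq : Tendsto (fun x => x⁻¹ * K x⁻¹) atTop (𝓝 ℓ) := hlim.comp tendsto_inv_atTop_nhdsGT_zero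
  have hratio := ((hq.comp (tendsto_id.const_mul_atTop hc)).div hq hℓ).const_mul (c ^ (1 - ϱ))
  rw [div_self hℓ, mul_one] at hratio
  have hcϱ : c ^ (1 - ϱ) = c ^ (0 : ℝ) := by
    rw [rpow_zero]
    refine tendsto_nhds_unique (hratio.congr' ?_) hSV
    filter_upwards [eventually_gt_atTop 0] with x hx
    rw [rpow_neg_mul_one_div_eq (mul_pos hc hx), rpow_neg_mul_one_div_eq hx,
      mul_rpow hc.le hx.le, mul_assoc, mul_left_comm (c ^ (1 - ϱ)) (x ^ (1 - ϱ)),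
      mul_div_mul_left _ _ (rpow_pos_of_pos hx _).ne', mul_div_assoc]
    rfl
  linarith [(rpow_right_inj hc hc1).1 hcϱ]

theorem cesaro_mean_subordination_asymptotics_weighted_general
    (K : ℝ → ℝ) (ϱ : ℝ) (ℓ : ℝ) (hℓ : 0 < ℓ)
    (hK_pos : ∀ l : ℝ, 0 < l → 0 < K l)
    (hlim : Tendsto (fun l => l * K l) (nhdsWithin 0 (Ioi 0)) (nhds ℓ))
    (hge : ∀ l : ℝ, 0 < l → ℓ ≤ l * K l)
    (hSV : ∀ c : ℝ, 0 < c →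
      Tendsto (fun x => ((c * x) ^ (-ϱ) * K (1 / (c * x))) / (x ^ (-ϱ) * K (1 / x)))
        atTop (nhds 1))
    (G : ℝ → ℝ → ℝ)
    (hG_meas : Measurable (Function.uncurry G))
    (hG_nonneg : ∀ t ∈ Ioi (0:ℝ), ∀ τ ∈ Ioi (0:ℝ), 0 ≤ G t τ)
    (hG : ∀ l : ℝ, 0 < l → ∀ τ : ℝ, 0 < τ →
      ∫ t in Ioi (0:ℝ), Real.exp (-l * t) * G t τ = K l * Real.exp (-(τ * l * K l)))
    (u : ℝ → ℝ)
    (hu_meas : Measurable u)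
    (hu_nonneg : ∀ τ ∈ Ioi (0:ℝ), 0 ≤ u τ)
    (hu_int : IntegrableOn (fun τ => Real.exp (-ℓ * τ) * u τ) (Ioi 0))
    (hu_ne : (∫ τ in Ioi (0:ℝ), Real.exp (-ℓ * τ) * u τ) ≠ 0) :
    Tendsto (fun t =>
      ((1 / t) * ∫ s in (0:ℝ)..t, ∫ τ in Ioi (0:ℝ), u τ * G s τ) /
        (((∫ τ in Ioi (0:ℝ), Real.exp (-ℓ * τ) * u τ) / Real.Gamma (ϱ + 1)) *
          (t⁻¹ * K t⁻¹)))
      atTop (nhds 1) := by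
  set J := ∫ τ in Ioi 0, exp (-ℓ * τ) * u τ
  obtain rfl : ϱ = 1 :=
    eq_one_of_tendsto_mul_of_tendsto_ratio hℓ.ne' two_pos (by norm_num) hlim (hSV 2 two_pos)
  have hprod : ∀ l, 0 < l → Integrable (fun p : ℝ × ℝ => exp (-l * p.2) * (u p.1 * G p.2 p.1))
      ((volume.restrict (Ioi 0)).prod (volume.restrict (Ioi 0))) := fun l hl =>
    integrable_exp_mul_subordination (hK_pos l hl).ne' hG_meas hG_nonneg (hG l hl) hu_meas
      hu_nonneg (integrableOn_exp_neg_mul_of_le (hge l hl) hu_int)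
  have hJ : Tendsto (fun l => ∫ τ in Ioi 0, exp (-(l * K l) * τ) * u τ) (𝓝[>] 0) (𝓝 J) :=
    (continuousWithinAt_integral_exp_neg_mul hu_int).tendsto.comp
      (tendsto_nhdsWithin_iff.2 ⟨hlim, eventually_nhdsWithin_of_forall hge⟩)
  have hA : Tendsto (fun l => l * ∫ t in Ioi 0, exp (-l * t) * subordinate G u t) (𝓝[>] 0)
      (𝓝 (ℓ * J)) := (hlim.mul hJ).congr' <| eventually_nhdsWithin_of_forall fun l hl => by
    simp only [integral_exp_mul_subordinate (hG l hl) (hprod l hl), mul_assoc]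
  have hmean := tendsto_inv_mul_integral_of_tendsto_mul_laplace
    (subordinate_nonneg hG_nonneg hu_nonneg)
    (fun l hl => integrableOn_exp_mul_subordinate (hprod l hl)) hA
  have hK : Tendsto (fun t => t⁻¹ * K t⁻¹) atTop (𝓝 ℓ) := hlim.comp tendsto_inv_atTop_nhdsGT_zero
  have hlimit := hmean.div (hK.const_mul J) (mul_ne_zero hu_ne hℓ.ne')
  rw [show ℓ * J / (J * ℓ) = 1 by field_simp] at hlimit
  refine hlimit.congr fun t => ?_
  norm_num [Gamma_two, subordinate, one_div]

/-- Remark (ii) after the main theorem: when `λ𝒦(λ) → ℓ > 0` as `λ → 0⁺`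
(and `λ𝒦(λ) ≥ ℓ`), the integrability of `u` may be dropped, provided the `L¹`
norm is replaced by the weighted norm `‖u‖_{1,ℓ} = ∫_0^∞ e^{-ℓτ} u(τ) dτ`. -/
theorem cesaro_mean_subordination_asymptotics_weighted
    (k K : ℝ → ℝ) (ϱ : ℝ) (hϱ : 0 ≤ ϱ) (ℓ : ℝ) (hℓ : 0 < ℓ)
    (hk_nonneg : ∀ t ∈ Ioi (0:ℝ), 0 ≤ k t)
    (hk_loc : LocallyIntegrableOn k (Ioi 0))
    (hK_int : ∀ l : ℝ, 0 < l → IntegrableOn (fun t => Real.exp (-l * t) * k t) (Ioi 0))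
    (hK_def : ∀ l : ℝ, 0 < l → K l = ∫ t in Ioi (0:ℝ), Real.exp (-l * t) * k t)
    (hK_pos : ∀ l : ℝ, 0 < l → 0 < K l)
    (hlim : Tendsto (fun l => l * K l) (nhdsWithin 0 (Ioi 0)) (nhds ℓ))
    (hge : ∀ l : ℝ, 0 < l → ℓ ≤ l * K l)
    (hSV : ∀ c : ℝ, 0 < c →
      Tendsto (fun x => ((c * x) ^ (-ϱ) * K (1 / (c * x))) / (x ^ (-ϱ) * K (1 / x)))
        atTop (nhds 1))
    (G : ℝ → ℝ → ℝ)
    (hG_meas : Measurable (Function.uncurry G))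
    (hG_nonneg : ∀ t ∈ Ioi (0:ℝ), ∀ τ ∈ Ioi (0:ℝ), 0 ≤ G t τ)
    (hG : ∀ l : ℝ, 0 < l → ∀ τ : ℝ, 0 < τ →
      ∫ t in Ioi (0:ℝ), Real.exp (-l * t) * G t τ = K l * Real.exp (-(τ * l * K l)))
    (u : ℝ → ℝ)
    (hu_meas : Measurable u)
    (hu_nonneg : ∀ τ ∈ Ioi (0:ℝ), 0 ≤ u τ)
    (hu_int : IntegrableOn (fun τ => Real.exp (-ℓ * τ) * u τ) (Ioi 0))
    (hu_ne : (∫ τ in Ioi (0:ℝ), Real.exp (-ℓ * τ) * u τ) ≠ 0) :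
    Tendsto (fun t =>
      ((1 / t) * ∫ s in (0:ℝ)..t, ∫ τ in Ioi (0:ℝ), u τ * G s τ) /
        (((∫ τ in Ioi (0:ℝ), Real.exp (-ℓ * τ) * u τ) / Real.Gamma (ϱ + 1)) *
          (t⁻¹ * K t⁻¹)))
      atTop (nhds 1) :=
  cesaro_mean_subordination_asymptotics_weighted_general K ϱ ℓ hℓ hK_pos hlim hge hSV G hG_meas
    hG_nonneg hG u hu_meas hu_nonneg hu_int hu_ne
end

section
/- Let μ : [0,1] → (0,∞) be continuous and define k(s) = ∫_0^1 (s^{-α}/Γ(1−α)) μ(α) dα for s > 0 (with 1/Γ(1−α) interpreted as 0 at α = 1). Then for every λ > 0, the Laplace transform of k satisfies ∫_0^∞ e^{-λs} k(s) ds = ∫_0^1 λ^{α−1} μ(α) dα. -/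
open MeasureTheory Real Filter Set

/-!
Swap the two integrals (Fubini). For each order `α < 1` the inner integral is a Gamma integral,
`∫₀^∞ e^{-λs} s^{-α} ds = Γ(1-α) λ^{α-1}`, which cancels the factor `1/Γ(1-α)`. Since the kernel
`e^{-λs} s^{-α}/Γ(1-α)` is nonnegative, the same computation applied to `|μ|` gives absolute
integrability on the product, from `∫₀¹ λ^{α-1} |μ(α)| dα < ∞`.
-/

lemma integrableOn_exp_neg_mul_mul_rpow_neg {α l : ℝ} (hα : α < 1) (hl : 0 < l) :
    IntegrableOn (fun s => exp (-l * s) * s ^ (-α)) (Ioi 0) := by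
  simpa [rpow_one, mul_comm] using
    integrableOn_rpow_mul_exp_neg_mul_rpow (p := 1) (by linarith) one_pos hl

lemma integral_exp_neg_mul_mul_rpow_neg {α l : ℝ} (hα : α < 1) (hl : 0 < l) :
    ∫ s in Ioi 0, exp (-l * s) * s ^ (-α) = Gamma (1 - α) * l ^ (α - 1) := by
  have h := integral_rpow_mul_exp_neg_mul_Ioi (sub_pos.2 hα) hl
  rw [sub_sub_cancel_left, one_div, inv_rpow hl.le, ← rpow_neg hl.le, neg_sub] at h
  simpa [mul_comm] using h

lemma continuousOn_Gamma_one_sub : ContinuousOn (fun α => Gamma (1 - α)) (Iio 1) := by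
  intro α (hα : α < 1)
  have hdiff : DifferentiableAt ℝ Gamma (1 - α) :=
    differentiableAt_Gamma fun m h => by linarith [sub_pos.2 hα, (m.cast_nonneg : (0 : ℝ) ≤ m)]
  exact (hdiff.continuousAt.comp (continuousAt_const.sub continuousAt_id)).continuousWithinAt

lemma integrable_exp_neg_mul_mul_rpow_neg_mul_div_Gamma {μ : ℝ → ℝ}
    (hμ : IntervalIntegrable μ volume 0 1) {l : ℝ} (hl : 0 < l) :
    Integrable (fun p : ℝ × ℝ => exp (-l * p.1) * p.1 ^ (-p.2) * (μ p.2 / Gamma (1 - p.2)))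
      ((volume.restrict (Ioi 0)).prod (volume.restrict (Ioo 0 1))) := by
  have hμ' : IntegrableOn μ (Icc 0 1) :=
    (intervalIntegrable_iff_integrableOn_Icc_of_le zero_le_one).1 hμ
  have hweight : AEStronglyMeasurable (fun α => μ α / Gamma (1 - α)) (volume.restrict (Ioo 0 1)) :=
    (hμ'.mono_set Ioo_subset_Icc_self).aestronglyMeasurable.mul
      (((continuousOn_Gamma_one_sub.mono fun _ h => h.2).inv₀ fun α hα =>
        (Gamma_pos_of_pos (sub_pos.2 hα.2)).ne').aestronglyMeasurable measurableSet_Ioo)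
  have hmeas : AEStronglyMeasurable
      (fun p : ℝ × ℝ => exp (-l * p.1) * p.1 ^ (-p.2) * (μ p.2 / Gamma (1 - p.2)))
      ((volume.restrict (Ioi 0)).prod (volume.restrict (Ioo 0 1))) :=
    (by fun_prop : Measurable fun p : ℝ × ℝ => exp (-l * p.1) * p.1 ^ (-p.2))
      |>.aestronglyMeasurable.mul hweight.comp_snd
  refine (integrable_prod_iff' hmeas).2 ⟨?_, ?_⟩
  · filter_upwards [ae_restrict_mem measurableSet_Ioo] with α hα
    exact (integrableOn_exp_neg_mul_mul_rpow_neg hα.2 hl).mul_const _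
  · have hbound : IntegrableOn (fun α => l ^ (α - 1) * ‖μ α‖) (Icc 0 1) :=
      IntegrableOn.continuousOn_mul
        (continuous_const.rpow (continuous_id.sub continuous_const) fun _ => .inl hl.ne').continuousOn
        hμ'.norm isCompact_Icc
    refine (hbound.mono_set Ioo_subset_Icc_self).congr ?_
    filter_upwards [ae_restrict_mem measurableSet_Ioo] with α hα
    have hΓ : 0 < Gamma (1 - α) := Gamma_pos_of_pos (sub_pos.2 hα.2)
    calc l ^ (α - 1) * ‖μ α‖
        = (∫ s in Ioi 0, exp (-l * s) * s ^ (-α)) * (‖μ α‖ / Gamma (1 - α)) := by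
          rw [integral_exp_neg_mul_mul_rpow_neg hα.2 hl]; field_simp
      _ = ∫ s in Ioi 0, ‖exp (-l * s) * s ^ (-α) * (μ α / Gamma (1 - α))‖ := by
          rw [← integral_mul_const]
          refine setIntegral_congr_fun measurableSet_Ioi fun s (hs : 0 < s) => ?_
          rw [norm_mul, norm_div, norm_of_nonneg hΓ.le,
            norm_of_nonneg (mul_pos (exp_pos _) (rpow_pos_of_pos hs _)).le]

lemma integral_exp_neg_mul_mul_integral_rpow_neg_div_Gamma_mul {μ : ℝ → ℝ}
    (hμ : IntervalIntegrable μ volume 0 1) {l : ℝ} (hl : 0 < l) :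
    ∫ s in Ioi 0, exp (-l * s) * ∫ α in (0:ℝ)..1, s ^ (-α) / Gamma (1 - α) * μ α
      = ∫ α in (0:ℝ)..1, l ^ (α - 1) * μ α := by
  simp only [intervalIntegral.integral_of_le zero_le_one, integral_Ioc_eq_integral_Ioo]
  calc ∫ s in Ioi 0, exp (-l * s) * ∫ α in Ioo 0 1, s ^ (-α) / Gamma (1 - α) * μ α
      = ∫ s in Ioi 0, ∫ α in Ioo 0 1, exp (-l * s) * s ^ (-α) * (μ α / Gamma (1 - α)) := by
        congr 1 with s
        rw [← integral_const_mul]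
        congr 1 with α
        ring
    _ = ∫ α in Ioo 0 1, ∫ s in Ioi 0, exp (-l * s) * s ^ (-α) * (μ α / Gamma (1 - α)) :=
        integral_integral_swap (integrable_exp_neg_mul_mul_rpow_neg_mul_div_Gamma hμ hl)
    _ = ∫ α in Ioo 0 1, l ^ (α - 1) * μ α := by
        refine setIntegral_congr_fun measurableSet_Ioo fun α hα => ?_
        have hΓ : 0 < Gamma (1 - α) := Gamma_pos_of_pos (sub_pos.2 hα.2)
        rw [integral_mul_const, integral_exp_neg_mul_mul_rpow_neg hα.2 hl]
        field_simp

theorem laplace_transform_distributed_order_kernel_general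
    (μ : ℝ → ℝ) (hμ_cont : ContinuousOn μ (Icc 0 1))
    (k : ℝ → ℝ)
    (hk : ∀ s : ℝ, 0 < s →
      k s = ∫ α in (0:ℝ)..1, s ^ (-α) / Real.Gamma (1 - α) * μ α) :
    ∀ l : ℝ, 0 < l →
      ∫ s in Ioi (0:ℝ), Real.exp (-l * s) * k s = ∫ α in (0:ℝ)..1, l ^ (α - 1) * μ α := by
  intro l hl
  rw [← integral_exp_neg_mul_mul_integral_rpow_neg_div_Gamma_mul
    (hμ_cont.intervalIntegrable_of_Icc zero_le_one) hl]
  exact setIntegral_congr_fun measurableSet_Ioi fun s hs => by rw [hk s hs]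

/-- Equation (1.10): the Laplace transform of the distributed-order kernel
`k(s) = ∫_0^1 (s^{-α}/Γ(1-α)) μ(α) dα` is `𝒦(λ) = ∫_0^1 λ^{α-1} μ(α) dα`.
(Note that in Lean `s^{-α}/Real.Gamma (1-α)` is `0` at `α = 1`, since
`Real.Gamma 0 = 0` and division by zero is zero, matching the convention.) -/
theorem laplace_transform_distributed_order_kernel
    (μ : ℝ → ℝ) (hμ_cont : ContinuousOn μ (Icc 0 1))
    (hμ_pos : ∀ α ∈ Icc (0:ℝ) 1, 0 < μ α)
    (k : ℝ → ℝ)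
    (hk : ∀ s : ℝ, 0 < s →
      k s = ∫ α in (0:ℝ)..1, s ^ (-α) / Real.Gamma (1 - α) * μ α) :
    ∀ l : ℝ, 0 < l →
      ∫ s in Ioi (0:ℝ), Real.exp (-l * s) * k s = ∫ α in (0:ℝ)..1, l ^ (α - 1) * μ α :=
  laplace_transform_distributed_order_kernel_general μ hμ_cont k hk
end

section
/- Let μ : [0,1] → (0,∞) be continuous and define L(x) = ∫_0^1 x^{-α} μ(α) dα for x > 0. Then L is slowly varying at infinity: for every c > 0, L(cx)/L(x) → 1 as x → ∞. -/
open MeasureTheory Real Filter Set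

lemma sv_aux_cont {μ : ℝ → ℝ} (hμ_cont : ContinuousOn μ (Icc 0 1)) {y : ℝ} (hy : 0 < y) :
    ContinuousOn (fun α : ℝ => y ^ (-α) * μ α) (Icc 0 1) := by
  apply ContinuousOn.mul _ hμ_cont
  have : (fun α : ℝ => y ^ (-α)) = fun α => Real.exp (Real.log y * (-α)) := by
    funext α; rw [Real.rpow_def_of_pos hy]
  rw [this]
  exact (Real.continuous_exp.comp (continuous_const.mul continuous_neg)).continuousOn

lemma sv_aux_int {μ : ℝ → ℝ} (hμ_cont : ContinuousOn μ (Icc 0 1)) {y : ℝ} (hy : 0 < y)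
    {p q : ℝ} (hp : p ∈ Icc (0:ℝ) 1) (hq : q ∈ Icc (0:ℝ) 1) :
    IntervalIntegrable (fun α : ℝ => y ^ (-α) * μ α) volume p q := by
  apply ((sv_aux_cont hμ_cont hy).mono _).intervalIntegrable
  rw [uIcc]
  exact Icc_subset_Icc (le_inf hp.1 hq.1) (sup_le hp.2 hq.2)

set_option maxHeartbeats 1000000 in
/-- Equation (1.11): the function `L(x) = ∫_0^1 x^{-α} μ(α) dα` is slowly
varying at infinity. -/
theorem distributed_order_slowly_varying
    (μ : ℝ → ℝ) (hμ_cont : ContinuousOn μ (Icc 0 1))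
    (hμ_pos : ∀ α ∈ Icc (0:ℝ) 1, 0 < μ α) :
    ∀ c : ℝ, 0 < c →
      Tendsto (fun x : ℝ =>
          (∫ α in (0:ℝ)..1, (c * x) ^ (-α) * μ α) / (∫ α in (0:ℝ)..1, x ^ (-α) * μ α))
        atTop (nhds 1) := by
  obtain ⟨αm, hαm, hmin⟩ := isCompact_Icc.exists_isMinOn (nonempty_Icc.2 zero_le_one) hμ_cont
  obtain ⟨αM, hαM, hmax⟩ := isCompact_Icc.exists_isMaxOn (nonempty_Icc.2 zero_le_one) hμ_cont
  have hmle : ∀ u ∈ Icc (0:ℝ) 1, μ αm ≤ μ u := fun u hu => isMinOn_iff.1 hmin u hu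
  have hMge : ∀ u ∈ Icc (0:ℝ) 1, μ u ≤ μ αM := fun u hu => isMaxOn_iff.1 hmax u hu
  set m := μ αm with hm_def
  set M := μ αM with hM_def
  have hm0 : 0 < m := hμ_pos _ hαm
  have hM0 : 0 < M := hμ_pos _ hαM
  intro c hc
  rw [Metric.tendsto_atTop]
  intro ε hε
  set B : ℝ := max 1 (c ^ (-1 : ℝ)) with hB_def
  have hB1 : (1:ℝ) ≤ B := le_max_left _ _
  have hB0 : (0:ℝ) < B := lt_of_lt_of_le one_pos hB1
  -- choose δ
  have hcd : ContinuousAt (fun t : ℝ => c ^ (-t)) 0 := by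
    have : (fun t : ℝ => c ^ (-t)) = fun t => Real.exp (Real.log c * (-t)) := by
      funext t; rw [Real.rpow_def_of_pos hc]
    rw [this]
    exact (Real.continuous_exp.comp (continuous_const.mul continuous_neg)).continuousAt
  have hev : ∀ᶠ t in nhds (0:ℝ), |c ^ (-t) - 1| < ε/3 := by
    have h := hcd.tendsto
    have h0 : c ^ (-(0:ℝ)) = 1 := by simp
    rw [h0] at h
    have h2 := h (Metric.ball_mem_nhds 1 (by positivity : (0:ℝ) < ε/3))
    filter_upwards [h2] with t ht
    simpa [Real.dist_eq] using ht
  obtain ⟨δ', hδ'pos, hδ'⟩ := Metric.eventually_nhds_iff_ball.1 hev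
  set δ : ℝ := min (δ'/2) (1/2) with hδ_def
  have hδ0 : 0 < δ := lt_min (by linarith) (by norm_num)
  have hδ1 : δ ≤ 1 := le_trans (min_le_right _ _) (by norm_num)
  have hδc : |c ^ (-δ) - 1| < ε/3 := by
    apply hδ'
    rw [Metric.mem_ball, Real.dist_eq, sub_zero, abs_of_pos hδ0]
    exact lt_of_le_of_lt (min_le_left _ _) (by linarith)
  set a : ℝ := min 1 (c ^ (-δ)) with ha_def
  set A : ℝ := max 1 (c ^ (-δ)) with hA_def
  have habs := abs_lt.1 hδc
  have ha_lb : 1 - ε/3 < a := lt_min (by linarith) (by linarith [habs.1])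
  have hA_ub : A < 1 + ε/3 := max_lt (by linarith) (by linarith [habs.2])
  have ha1 : a ≤ 1 := min_le_left _ _
  have hA1 : (1:ℝ) ≤ A := le_max_left _ _
  have ha0 : 0 < a := lt_min one_pos (Real.rpow_pos_of_pos hc _)
  -- choose N
  set η : ℝ := ε/3 * ((δ/2) * m) / (B * M) with hη_def
  have hη0 : 0 < η := by positivity
  have hevx : ∀ᶠ x : ℝ in atTop, 1 ≤ x ∧ x ^ (-(δ/2)) < η :=
    (eventually_ge_atTop 1).and
      ((tendsto_rpow_neg_atTop (by positivity)).eventually_lt_const hη0)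
  obtain ⟨N, hN⟩ := eventually_atTop.1 hevx
  refine ⟨N, fun x hx => ?_⟩
  obtain ⟨hx1, hxη⟩ := hN x hx
  have hx0 : (0:ℝ) < x := lt_of_lt_of_le one_pos hx1
  have hcx0 : 0 < c * x := mul_pos hc hx0
  -- membership facts
  have h0m : (0:ℝ) ∈ Icc (0:ℝ) 1 := ⟨le_refl _, zero_le_one⟩
  have h1m : (1:ℝ) ∈ Icc (0:ℝ) 1 := ⟨zero_le_one, le_refl _⟩
  have hδm : δ ∈ Icc (0:ℝ) 1 := ⟨hδ0.le, hδ1⟩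
  have hδ2m : δ/2 ∈ Icc (0:ℝ) 1 := ⟨by linarith, by linarith⟩
  -- c-power bounds
  have hcub : ∀ u ∈ Icc (0:ℝ) 1, c ^ (-u) ≤ B := by
    intro u hu
    rcases le_or_gt 1 c with h | h
    · exact le_trans (Real.rpow_le_one_of_one_le_of_nonpos h (neg_nonpos.2 hu.1)) hB1
    · exact le_trans (Real.rpow_le_rpow_of_exponent_ge hc h.le (neg_le_neg hu.2))
        (le_max_right _ _)
  have hcA : ∀ u ∈ Icc (0:ℝ) δ, c ^ (-u) ≤ A := by
    intro u hu
    rcases le_or_gt 1 c with h | h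
    · exact le_trans (Real.rpow_le_one_of_one_le_of_nonpos h (neg_nonpos.2 hu.1)) hA1
    · exact le_trans (Real.rpow_le_rpow_of_exponent_ge hc h.le (neg_le_neg hu.2))
        (le_max_right _ _)
  have hca : ∀ u ∈ Icc (0:ℝ) δ, a ≤ c ^ (-u) := by
    intro u hu
    rcases le_or_gt 1 c with h | h
    · exact le_trans (min_le_right _ _)
        (Real.rpow_le_rpow_of_exponent_le h (neg_le_neg hu.2))
    · refine le_trans (min_le_left _ _) ?_
      have := Real.rpow_le_rpow_of_exponent_ge hc h.le (neg_nonpos.2 hu.1)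
      rwa [Real.rpow_zero] at this
  -- integrals
  set L : ℝ := ∫ α in (0:ℝ)..1, x ^ (-α) * μ α with hL_def
  set Lc : ℝ := ∫ α in (0:ℝ)..1, (c * x) ^ (-α) * μ α with hLc_def
  set I1 : ℝ := ∫ α in (0:ℝ)..δ, x ^ (-α) * μ α with hI1_def
  set I2 : ℝ := ∫ α in δ..1, x ^ (-α) * μ α with hI2_def
  set I0 : ℝ := ∫ α in (0:ℝ)..(δ/2), x ^ (-α) * μ α with hI0_def
  set J1 : ℝ := ∫ α in (0:ℝ)..δ, (c * x) ^ (-α) * μ α with hJ1_def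
  set J2 : ℝ := ∫ α in δ..1, (c * x) ^ (-α) * μ α with hJ2_def
  have hsplitL : I1 + I2 = L :=
    intervalIntegral.integral_add_adjacent_intervals
      (sv_aux_int hμ_cont hx0 h0m hδm) (sv_aux_int hμ_cont hx0 hδm h1m)
  have hsplitLc : J1 + J2 = Lc :=
    intervalIntegral.integral_add_adjacent_intervals
      (sv_aux_int hμ_cont hcx0 h0m hδm) (sv_aux_int hμ_cont hcx0 hδm h1m)
  have hLpos : 0 < L := by
    apply intervalIntegral.intervalIntegral_pos_of_pos_on
      (sv_aux_int hμ_cont hx0 h0m h1m) _ one_pos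
    intro u hu
    exact mul_pos (Real.rpow_pos_of_pos hx0 _) (hμ_pos u ⟨hu.1.le, hu.2.le⟩)
  have hI2nn : 0 ≤ I2 := by
    apply intervalIntegral.integral_nonneg hδ1
    intro u hu
    exact mul_nonneg (Real.rpow_pos_of_pos hx0 _).le
      (hμ_pos u ⟨le_trans hδ0.le hu.1, hu.2⟩).le
  have hJ2nn : 0 ≤ J2 := by
    apply intervalIntegral.integral_nonneg hδ1
    intro u hu
    exact mul_nonneg (Real.rpow_pos_of_pos hcx0 _).le
      (hμ_pos u ⟨le_trans hδ0.le hu.1, hu.2⟩).le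
  -- lower bound for I0 and I1
  have hI0lb : x ^ (-(δ/2)) * ((δ/2) * m) ≤ I0 := by
    have h : (∫ _α in (0:ℝ)..(δ/2), x ^ (-(δ/2)) * m) ≤ I0 := by
      apply intervalIntegral.integral_mono_on (by positivity : (0:ℝ) ≤ δ/2)
        intervalIntegrable_const (sv_aux_int hμ_cont hx0 h0m hδ2m)
      intro u hu
      have h1 : x ^ (-(δ/2)) ≤ x ^ (-u) :=
        Real.rpow_le_rpow_of_exponent_le hx1 (neg_le_neg hu.2)
      have h2 : m ≤ μ u := hmle u ⟨hu.1, le_trans hu.2 (by linarith)⟩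
      exact mul_le_mul h1 h2 hm0.le (Real.rpow_pos_of_pos hx0 _).le
    simpa using h
  have hI0I1 : I0 ≤ I1 := by
    have hsplit : I0 + (∫ α in (δ/2)..δ, x ^ (-α) * μ α) = I1 :=
      intervalIntegral.integral_add_adjacent_intervals
        (sv_aux_int hμ_cont hx0 h0m hδ2m) (sv_aux_int hμ_cont hx0 hδ2m hδm)
    have hnn : 0 ≤ ∫ α in (δ/2)..δ, x ^ (-α) * μ α := by
      apply intervalIntegral.integral_nonneg (by linarith)
      intro u hu
      exact mul_nonneg (Real.rpow_pos_of_pos hx0 _).le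
        (hμ_pos u ⟨le_trans (by linarith) hu.1, le_trans hu.2 hδ1⟩).le
    linarith
  -- upper bound for I2
  have hI2ub : I2 ≤ x ^ (-δ) * M := by
    have h : I2 ≤ ∫ _α in δ..1, x ^ (-δ) * M := by
      apply intervalIntegral.integral_mono_on hδ1
        (sv_aux_int hμ_cont hx0 hδm h1m) intervalIntegrable_const
      intro u hu
      have h1 : x ^ (-u) ≤ x ^ (-δ) :=
        Real.rpow_le_rpow_of_exponent_le hx1 (neg_le_neg hu.1)
      have h2 : μ u ≤ M := hMge u ⟨le_trans hδ0.le hu.1, hu.2⟩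
      exact mul_le_mul h1 h2 (hμ_pos u ⟨le_trans hδ0.le hu.1, hu.2⟩).le
        (Real.rpow_pos_of_pos hx0 _).le
    have h2 : (∫ _α in δ..1, x ^ (-δ) * M) = (1 - δ) * (x ^ (-δ) * M) := by
      simp [smul_eq_mul]; ring
    rw [h2] at h
    nlinarith [mul_nonneg hδ0.le (mul_nonneg (Real.rpow_pos_of_pos hx0 (-δ)).le hM0.le)]
  -- key smallness: B * I2 < ε/3 * L
  have hxδsplit : x ^ (-δ) = x ^ (-(δ/2)) * x ^ (-(δ/2)) := by
    rw [← Real.rpow_add hx0]; ring_nf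
  have hxp : 0 < x ^ (-(δ/2)) := Real.rpow_pos_of_pos hx0 _
  have hBMη : B * M * η = ε/3 * ((δ/2) * m) := by
    rw [hη_def]; field_simp
  have hkey : B * I2 < ε/3 * L :=
    calc B * I2 ≤ B * (x ^ (-δ) * M) := mul_le_mul_of_nonneg_left hI2ub hB0.le
    _ = B * M * x ^ (-(δ/2)) * x ^ (-(δ/2)) := by rw [hxδsplit]; ring
    _ < B * M * η * x ^ (-(δ/2)) :=
        mul_lt_mul_of_pos_right (mul_lt_mul_of_pos_left hxη (by positivity)) hxp
    _ = ε/3 * (x ^ (-(δ/2)) * ((δ/2) * m)) := by rw [hBMη]; ring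
    _ ≤ ε/3 * I0 := mul_le_mul_of_nonneg_left hI0lb (by positivity)
    _ ≤ ε/3 * L := by
        have hI0L : I0 ≤ L := le_trans hI0I1 (by linarith)
        exact mul_le_mul_of_nonneg_left hI0L (by positivity)
  -- bounds relating J's to I's
  have hfactor : ∀ u : ℝ, (c * x) ^ (-u) = c ^ (-u) * x ^ (-u) := fun u =>
    Real.mul_rpow hc.le hx0.le
  have hJ1ub : J1 ≤ A * I1 := by
    have h := intervalIntegral.integral_mono_on hδ0.le
      (sv_aux_int hμ_cont hcx0 h0m hδm)
      ((sv_aux_int hμ_cont hx0 h0m hδm).const_mul A) ?_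
    · rwa [intervalIntegral.integral_const_mul] at h
    · intro u hu
      rw [hfactor u, mul_assoc]
      exact mul_le_mul_of_nonneg_right (hcA u hu)
        (mul_nonneg (Real.rpow_pos_of_pos hx0 _).le
          (hμ_pos u ⟨hu.1, le_trans hu.2 hδ1⟩).le)
  have hJ1lb : a * I1 ≤ J1 := by
    have h := intervalIntegral.integral_mono_on hδ0.le
      ((sv_aux_int hμ_cont hx0 h0m hδm).const_mul a)
      (sv_aux_int hμ_cont hcx0 h0m hδm) ?_
    · rwa [intervalIntegral.integral_const_mul] at h
    · intro u hu
      rw [hfactor u, mul_assoc]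
      exact mul_le_mul_of_nonneg_right (hca u hu)
        (mul_nonneg (Real.rpow_pos_of_pos hx0 _).le
          (hμ_pos u ⟨hu.1, le_trans hu.2 hδ1⟩).le)
  have hJ2ub : J2 ≤ B * I2 := by
    have h := intervalIntegral.integral_mono_on hδ1
      (sv_aux_int hμ_cont hcx0 hδm h1m)
      ((sv_aux_int hμ_cont hx0 hδm h1m).const_mul B) ?_
    · rwa [intervalIntegral.integral_const_mul] at h
    · intro u hu
      rw [hfactor u, mul_assoc]
      exact mul_le_mul_of_nonneg_right (hcub u ⟨le_trans hδ0.le hu.1, hu.2⟩)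
        (mul_nonneg (Real.rpow_pos_of_pos hx0 _).le
          (hμ_pos u ⟨le_trans hδ0.le hu.1, hu.2⟩).le)
  -- final arithmetic
  clear_value m M B δ a A η L Lc I1 I2 I0 J1 J2
  have hI1nn : 0 ≤ I1 := le_trans (le_trans (by positivity) hI0lb) hI0I1
  have hI1L : I1 ≤ L := by linarith
  have hεL : 0 < ε * L := mul_pos hε hLpos
  have hIB : I2 ≤ B * I2 := le_mul_of_one_le_left hI2nn hB1
  have key : |Lc - L| < ε * L := by
    rw [abs_lt]
    constructor
    · have h1 : a * I1 ≤ Lc := le_trans hJ1lb (by linarith)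
      have h2 : a * L - a * I2 = a * I1 := by rw [← hsplitL]; ring
      have h3 : (1 - ε/3) * L < a * L := mul_lt_mul_of_pos_right ha_lb hLpos
      have h4 : a * I2 ≤ I2 := mul_le_of_le_one_left hI2nn ha1
      linarith
    · have h1 : Lc ≤ A * I1 + B * I2 := by linarith
      have h2 : A * I1 ≤ A * L :=
        mul_le_mul_of_nonneg_left hI1L (le_trans zero_le_one hA1)
      have h3 : A * L < (1 + ε/3) * L := mul_lt_mul_of_pos_right hA_ub hLpos
      linarith
  rw [Real.dist_eq, div_sub_one hLpos.ne', abs_div, abs_of_pos hLpos, div_lt_iff₀ hLpos]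
  exact key
end

section
/- Let k : (0,∞) → [0,∞) be locally integrable with Laplace transform 𝒦(λ) finite and positive for every λ > 0, let G be a subordination density associated with 𝒦, and let u : (0,∞) → [0,∞) be integrable on (0,∞). Define u^E(t) = ∫_0^∞ u(τ) G(t,τ) dτ and U(t) = ∫_0^t u^E(r) dr. Then for every λ > 0, λ · (∫_0^∞ e^{-λt} U(t) dt) = 𝒦(λ) ∫_0^∞ e^{-τ λ 𝒦(λ)} u(τ) dτ. -/
/-!
All integrands are nonnegative, so we compute with lower Lebesgue integrals, where Tonelli's theorem
needs no integrability. Exchanging the order of integration, the Laplace transform of the primitive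
`U` is `λ⁻¹` times that of `u^E`, and the Laplace transform of `u^E` is `∫ u(τ) L[G(·,τ)](λ) dτ =
𝒦(λ) ∫ e^{-τλ𝒦(λ)} u(τ) dτ`. This value is finite, so `u^E` is finite almost everywhere and the
Bochner integrals of the statement are the `toReal` of the lower integrals.
-/

open MeasureTheory Real Set
open scoped ENNReal

theorem lintegral_exp_neg_mul_Ici {l : ℝ} (hl : 0 < l) (r : ℝ) :
    ∫⁻ t in Ici r, ENNReal.ofReal (exp (-l * t)) = ENNReal.ofReal (exp (-l * r) / l) := by
  rw [← setLIntegral_congr Ioi_ae_eq_Ici, ← ofReal_integral_eq_lintegral_ofReal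
    (integrableOn_exp_mul_Ioi (neg_neg_of_pos hl) r) (ae_of_all _ fun _ => (exp_pos _).le),
    integral_exp_mul_Ioi (neg_neg_of_pos hl), neg_div_neg_eq]

theorem MeasureTheory.IntegrableOn.exp_neg_mul {u : ℝ → ℝ} (hu : IntegrableOn u (Ioi 0)) {c : ℝ}
    (hc : 0 ≤ c) : IntegrableOn (fun τ => exp (-(τ * c)) * u τ) (Ioi 0) := by
  refine hu.bdd_mul (c := 1) (by fun_prop) (ae_restrict_of_forall_mem measurableSet_Ioi
    fun τ (hτ : 0 < τ) => ?_)
  rw [norm_of_nonneg (exp_pos _).le, exp_le_one_iff, neg_nonpos]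
  positivity

theorem lintegral_exp_mul_lintegral_Ioc {a l : ℝ} (hl : 0 < l) {f : ℝ → ℝ≥0∞}
    (hf : AEMeasurable f (volume.restrict (Ioi a))) :
    ∫⁻ t in Ioi a, ENNReal.ofReal (exp (-l * t)) * ∫⁻ r in Ioc a t, f r =
      ENNReal.ofReal l⁻¹ * ∫⁻ r in Ioi a, ENNReal.ofReal (exp (-l * r)) * f r := by
  set F : ℝ → ℝ → ℝ≥0∞ := fun t r => {p : ℝ × ℝ | p.2 ≤ p.1}.indicator
    (fun p => ENNReal.ofReal (exp (-l * p.1)) * f p.2) (t, r)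
  have hF : AEMeasurable (Function.uncurry F)
      ((volume.restrict (Ioi a)).prod (volume.restrict (Ioi a))) :=
    ((by fun_prop : Measurable fun p : ℝ × ℝ => ENNReal.ofReal (exp (-l * p.1))).aemeasurable.mul
      hf.comp_snd).indicator (measurableSet_le measurable_snd measurable_fst)
  have hF_t : ∀ t, ∫⁻ r in Ioi a, F t r = ENNReal.ofReal (exp (-l * t)) * ∫⁻ r in Ioc a t, f r := by
    intro t
    have : F t = fun r => ENNReal.ofReal (exp (-l * t)) * (Iic t).indicator f r := by
      ext r; by_cases h : r ≤ t <;> simp [F, h]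
    rw [this, lintegral_const_mul' _ _ ENNReal.ofReal_ne_top, lintegral_indicator measurableSet_Iic,
      Measure.restrict_restrict measurableSet_Iic, inter_comm, Ioi_inter_Iic]
  have hF_r : ∀ r ∈ Ioi a, ∫⁻ t in Ioi a, F t r = ENNReal.ofReal (l⁻¹ * exp (-l * r)) * f r := by
    intro r hr
    have hw : Measurable fun t : ℝ => ENNReal.ofReal (exp (-l * t)) := by fun_prop
    have : (fun t => F t r) =
        fun t => (Ici r).indicator (fun t => ENNReal.ofReal (exp (-l * t))) t * f r := by
      ext t; by_cases h : r ≤ t <;> simp [F, h]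
    rw [this, lintegral_mul_const _ (hw.indicator measurableSet_Ici),
      lintegral_indicator measurableSet_Ici, Measure.restrict_restrict measurableSet_Ici,
      inter_eq_left.mpr (Ici_subset_Ioi.mpr hr), lintegral_exp_neg_mul_Ici hl, div_eq_inv_mul]
  calc ∫⁻ t in Ioi a, ENNReal.ofReal (exp (-l * t)) * ∫⁻ r in Ioc a t, f r
      = ∫⁻ t in Ioi a, ∫⁻ r in Ioi a, F t r := by simp_rw [hF_t]
    _ = ∫⁻ r in Ioi a, ∫⁻ t in Ioi a, F t r := lintegral_lintegral_swap hF
    _ = ∫⁻ r in Ioi a, ENNReal.ofReal l⁻¹ * (ENNReal.ofReal (exp (-l * r)) * f r) := by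
      refine setLIntegral_congr_fun measurableSet_Ioi fun r hr => ?_
      rw [hF_r r hr, ENNReal.ofReal_mul (inv_nonneg.mpr hl.le), mul_assoc]
    _ = _ := lintegral_const_mul' _ _ ENNReal.ofReal_ne_top

theorem lintegral_mul_lintegral_mul_comm {α β : Type*} [MeasurableSpace α] [MeasurableSpace β]
    {μ : Measure α} {ν : Measure β} [SFinite μ] [SFinite ν] {w : α → ℝ≥0∞} {f : β → ℝ≥0∞}
    {H : α → β → ℝ≥0∞} (hw : AEMeasurable w μ) (hf : AEMeasurable f ν)
    (hH : Measurable (Function.uncurry H)) :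
    ∫⁻ x, w x * ∫⁻ y, f y * H x y ∂ν ∂μ = ∫⁻ y, f y * ∫⁻ x, w x * H x y ∂μ ∂ν := by
  calc ∫⁻ x, w x * ∫⁻ y, f y * H x y ∂ν ∂μ = ∫⁻ x, ∫⁻ y, w x * (f y * H x y) ∂ν ∂μ := by
        congr 1; ext x
        exact (lintegral_const_mul'' _ (hf.mul hH.of_uncurry_left.aemeasurable)).symm
    _ = ∫⁻ y, ∫⁻ x, w x * (f y * H x y) ∂μ ∂ν :=
        lintegral_lintegral_swap (hw.comp_fst.mul (hf.comp_snd.mul hH.aemeasurable))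
    _ = _ := by
        congr 1; ext y
        simp_rw [mul_left_comm (w _)]
        exact lintegral_const_mul'' _ (hw.mul hH.of_uncurry_right.aemeasurable)

theorem ae_lt_top_of_lintegral_mul_ne_top {α : Type*} [MeasurableSpace α] {μ : Measure α}
    {w f : α → ℝ≥0∞} (hw : AEMeasurable w μ) (hf : AEMeasurable f μ) (hw0 : ∀ x, w x ≠ 0)
    (h : ∫⁻ x, w x * f x ∂μ ≠ ∞) : ∀ᵐ x ∂μ, f x < ∞ := by
  filter_upwards [ae_lt_top' (hw.mul hf) h] with x hx
  rcases ENNReal.mul_lt_top_iff.mp hx with hx | hx | hx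
  exacts [hx.2, absurd hx (hw0 x), hx ▸ ENNReal.zero_lt_top]

/-- The subordinated function `u^E(t) = ∫_0^∞ u(τ) G(t,τ) dτ`, computed in `ℝ≥0∞`. -/
noncomputable def lsubordinated (u : ℝ → ℝ) (G : ℝ → ℝ → ℝ) (t : ℝ) : ℝ≥0∞ :=
  ∫⁻ τ in Ioi 0, ENNReal.ofReal (u τ) * ENNReal.ofReal (G t τ)

section Subordination

variable {u : ℝ → ℝ} {G : ℝ → ℝ → ℝ}

theorem aemeasurable_lsubordinated {μ : Measure ℝ} [SFinite μ]
    (hu : AEMeasurable u (volume.restrict (Ioi 0))) (hG : Measurable (Function.uncurry G)) :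
    AEMeasurable (lsubordinated u G) μ :=
  AEMeasurable.lintegral_prod_right'
    (f := fun p => ENNReal.ofReal (u p.2) * ENNReal.ofReal (G p.1 p.2))
    (hu.ennreal_ofReal.comp_snd.mul hG.ennreal_ofReal.aemeasurable)

theorem integral_mul_eq_toReal_lsubordinated {t : ℝ}
    (hu : AEStronglyMeasurable u (volume.restrict (Ioi 0))) (hG : Measurable (Function.uncurry G))
    (hu0 : ∀ τ ∈ Ioi 0, 0 ≤ u τ) (hG0 : ∀ τ ∈ Ioi 0, 0 ≤ G t τ) :
    ∫ τ in Ioi 0, u τ * G t τ = (lsubordinated u G t).toReal := by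
  rw [integral_eq_lintegral_of_nonneg_ae (ae_restrict_of_forall_mem measurableSet_Ioi
    fun τ hτ => mul_nonneg (hu0 τ hτ) (hG0 τ hτ)) (hu.mul hG.of_uncurry_left.aestronglyMeasurable)]
  exact congrArg ENNReal.toReal
    (setLIntegral_congr_fun measurableSet_Ioi fun τ hτ => ENNReal.ofReal_mul (hu0 τ hτ))

theorem intervalIntegral_integral_mul_eq_toReal_lintegral {t : ℝ} (ht : 0 ≤ t)
    (hu : AEStronglyMeasurable u (volume.restrict (Ioi 0))) (hG : Measurable (Function.uncurry G))
    (hu0 : ∀ τ ∈ Ioi 0, 0 ≤ u τ) (hG0 : ∀ r ∈ Ioi 0, ∀ τ ∈ Ioi 0, 0 ≤ G r τ)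
    (hfin : ∀ᵐ r ∂(volume.restrict (Ioi 0)), lsubordinated u G r < ∞) :
    ∫ r in 0..t, ∫ τ in Ioi 0, u τ * G r τ = (∫⁻ r in Ioc 0 t, lsubordinated u G r).toReal := by
  rw [intervalIntegral.integral_of_le ht, ← integral_toReal
    (aemeasurable_lsubordinated hu.aemeasurable hG)
    (ae_restrict_of_ae_restrict_of_subset Ioc_subset_Ioi_self hfin)]
  exact setIntegral_congr_fun measurableSet_Ioc fun r hr =>
    integral_mul_eq_toReal_lsubordinated hu hG hu0 (hG0 r hr.1)

theorem lintegral_exp_mul_lsubordinated {l : ℝ} {φ : ℝ → ℝ}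
    (hu : AEMeasurable u (volume.restrict (Ioi 0))) (hu0 : ∀ τ ∈ Ioi 0, 0 ≤ u τ)
    (hG : Measurable (Function.uncurry G)) (hG0 : ∀ t ∈ Ioi 0, ∀ τ ∈ Ioi 0, 0 ≤ G t τ)
    (hLG : ∀ τ ∈ Ioi 0, ∫ t in Ioi 0, exp (-l * t) * G t τ = φ τ)
    (hφ : ∀ τ ∈ Ioi 0, φ τ ≠ 0) :
    ∫⁻ t in Ioi 0, ENNReal.ofReal (exp (-l * t)) * lsubordinated u G t =
      ∫⁻ τ in Ioi 0, ENNReal.ofReal (φ τ * u τ) := by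
  unfold lsubordinated
  rw [lintegral_mul_lintegral_mul_comm (by fun_prop) hu.ennreal_ofReal
    (H := fun t τ => ENNReal.ofReal (G t τ)) hG.ennreal_ofReal]
  refine setLIntegral_congr_fun measurableSet_Ioi fun τ hτ => ?_
  have hint : IntegrableOn (fun t => exp (-l * t) * G t τ) (Ioi 0) :=
    .of_integral_ne_zero (hLG τ hτ ▸ hφ τ hτ)
  have hnonneg : 0 ≤ᵐ[volume.restrict (Ioi 0)] fun t => exp (-l * t) * G t τ :=
    ae_restrict_of_forall_mem measurableSet_Ioi fun t ht =>
      mul_nonneg (exp_pos _).le (hG0 t ht τ hτ)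
  calc ENNReal.ofReal (u τ) * ∫⁻ t in Ioi 0, ENNReal.ofReal (exp (-l * t)) * ENNReal.ofReal (G t τ)
      = ENNReal.ofReal (u τ) * ENNReal.ofReal (∫ t in Ioi 0, exp (-l * t) * G t τ) := by
        simp_rw [ofReal_integral_eq_lintegral_ofReal hint hnonneg,
          ENNReal.ofReal_mul (exp_pos _).le]
    _ = ENNReal.ofReal (φ τ * u τ) := by rw [hLG τ hτ, mul_comm, ENNReal.ofReal_mul' (hu0 τ hτ)]

theorem integral_exp_mul_primitive_eq_toReal_lintegral {l : ℝ}
    (hu : AEStronglyMeasurable u (volume.restrict (Ioi 0))) (hG : Measurable (Function.uncurry G))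
    (hu0 : ∀ τ ∈ Ioi 0, 0 ≤ u τ) (hG0 : ∀ r ∈ Ioi 0, ∀ τ ∈ Ioi 0, 0 ≤ G r τ)
    (hfin : ∀ᵐ r ∂(volume.restrict (Ioi 0)), lsubordinated u G r < ∞)
    (hL : ∫⁻ t in Ioi 0, ENNReal.ofReal (exp (-l * t)) * ∫⁻ r in Ioc 0 t, lsubordinated u G r ≠ ∞) :
    ∫ t in Ioi 0, exp (-l * t) * ∫ r in 0..t, ∫ τ in Ioi 0, u τ * G r τ =
      (∫⁻ t in Ioi 0, ENNReal.ofReal (exp (-l * t)) *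
        ∫⁻ r in Ioc 0 t, lsubordinated u G r).toReal := by
  have hL_meas : Measurable fun t => ENNReal.ofReal (exp (-l * t)) *
      ∫⁻ r in Ioc 0 t, lsubordinated u G r :=
    (by fun_prop : Measurable fun t => ENNReal.ofReal (exp (-l * t))).mul <|
      Monotone.measurable fun a b hab => lintegral_mono_set (Ioc_subset_Ioc_right hab)
  rw [← integral_toReal hL_meas.aemeasurable (ae_lt_top' hL_meas.aemeasurable hL)]
  refine setIntegral_congr_fun measurableSet_Ioi fun t ht => ?_
  rw [intervalIntegral_integral_mul_eq_toReal_lintegral ht.le hu hG hu0 hG0 hfin,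
    ENNReal.toReal_mul, ENNReal.toReal_ofReal (exp_pos _).le]

end Subordination

theorem laplace_transform_primitive_subordinated_general
    (K : ℝ → ℝ)
    (hK_pos : ∀ l : ℝ, 0 < l → 0 < K l)
    (G : ℝ → ℝ → ℝ)
    (hG_meas : Measurable (Function.uncurry G))
    (hG_nonneg : ∀ t ∈ Ioi (0:ℝ), ∀ τ ∈ Ioi (0:ℝ), 0 ≤ G t τ)
    (hG : ∀ l : ℝ, 0 < l → ∀ τ : ℝ, 0 < τ →
      ∫ t in Ioi (0:ℝ), Real.exp (-l * t) * G t τ = K l * Real.exp (-(τ * l * K l)))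
    (u : ℝ → ℝ)
    (hu_nonneg : ∀ τ ∈ Ioi (0:ℝ), 0 ≤ u τ)
    (hu_int : IntegrableOn u (Ioi 0)) :
    ∀ l : ℝ, 0 < l →
      l * ∫ t in Ioi (0:ℝ), Real.exp (-l * t) *
          (∫ r in (0:ℝ)..t, ∫ τ in Ioi (0:ℝ), u τ * G r τ) =
        K l * ∫ τ in Ioi (0:ℝ), Real.exp (-(τ * l * K l)) * u τ := by
  intro l hl
  have hc := hK_pos l hl
  have hu := hu_int.aestronglyMeasurable
  have hg_nonneg : ∀ τ ∈ Ioi (0:ℝ), 0 ≤ K l * exp (-(τ * l * K l)) * u τ := fun τ hτ =>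
    mul_nonneg (mul_nonneg hc.le (exp_pos _).le) (hu_nonneg τ hτ)
  have hg_int : IntegrableOn (fun τ => K l * exp (-(τ * l * K l)) * u τ) (Ioi 0) := by
    simpa only [IntegrableOn, mul_assoc] using
      (hu_int.exp_neg_mul (mul_pos hl hc).le).const_mul (K l)
  have hJ : ∫⁻ t in Ioi 0, ENNReal.ofReal (exp (-l * t)) * lsubordinated u G t =
      ENNReal.ofReal (∫ τ in Ioi 0, K l * exp (-(τ * l * K l)) * u τ) := by
    rw [lintegral_exp_mul_lsubordinated hu.aemeasurable hu_nonneg hG_meas hG_nonneg (hG l hl)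
      (fun τ _ => (mul_pos hc (exp_pos _)).ne'), ofReal_integral_eq_lintegral_ofReal
      hg_int (ae_restrict_of_forall_mem measurableSet_Ioi hg_nonneg)]
  have hfin := ae_lt_top_of_lintegral_mul_ne_top (by fun_prop)
    (aemeasurable_lsubordinated hu.aemeasurable hG_meas) (fun t => by simp [exp_pos])
    (hJ ▸ ENNReal.ofReal_ne_top)
  have hLU : ∫⁻ t in Ioi 0, ENNReal.ofReal (exp (-l * t)) * ∫⁻ r in Ioc 0 t, lsubordinated u G r =
      ENNReal.ofReal l⁻¹ * ENNReal.ofReal (∫ τ in Ioi 0, K l * exp (-(τ * l * K l)) * u τ) := by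
    rw [lintegral_exp_mul_lintegral_Ioc hl (aemeasurable_lsubordinated hu.aemeasurable hG_meas), hJ]
  rw [integral_exp_mul_primitive_eq_toReal_lintegral hu hG_meas hu_nonneg hG_nonneg hfin
      (hLU ▸ ENNReal.mul_ne_top ENNReal.ofReal_ne_top ENNReal.ofReal_ne_top),
    hLU, ENNReal.toReal_mul, ENNReal.toReal_ofReal (inv_nonneg.2 hl.le), ENNReal.toReal_ofReal
      (setIntegral_nonneg measurableSet_Ioi hg_nonneg), mul_inv_cancel_left₀ hl.ne']
  simp_rw [mul_assoc]
  exact integral_const_mul _ _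

/-- Equation (3.4): with `U(t) = ∫_0^t u^E(r) dr` the primitive of the
subordinated function, its Laplace transform `w` satisfies
`λ w(λ) = 𝒦(λ) ∫_0^∞ e^{-τλ𝒦(λ)} u(τ) dτ`. -/
theorem laplace_transform_primitive_subordinated
    (k K : ℝ → ℝ)
    (hk_nonneg : ∀ t ∈ Ioi (0:ℝ), 0 ≤ k t)
    (hk_loc : LocallyIntegrableOn k (Ioi 0))
    (hK_int : ∀ l : ℝ, 0 < l → IntegrableOn (fun t => Real.exp (-l * t) * k t) (Ioi 0))
    (hK_def : ∀ l : ℝ, 0 < l → K l = ∫ t in Ioi (0:ℝ), Real.exp (-l * t) * k t)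
    (hK_pos : ∀ l : ℝ, 0 < l → 0 < K l)
    (G : ℝ → ℝ → ℝ)
    (hG_meas : Measurable (Function.uncurry G))
    (hG_nonneg : ∀ t ∈ Ioi (0:ℝ), ∀ τ ∈ Ioi (0:ℝ), 0 ≤ G t τ)
    (hG : ∀ l : ℝ, 0 < l → ∀ τ : ℝ, 0 < τ →
      ∫ t in Ioi (0:ℝ), Real.exp (-l * t) * G t τ = K l * Real.exp (-(τ * l * K l)))
    (u : ℝ → ℝ)
    (hu_nonneg : ∀ τ ∈ Ioi (0:ℝ), 0 ≤ u τ)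
    (hu_int : IntegrableOn u (Ioi 0)) :
    ∀ l : ℝ, 0 < l →
      l * ∫ t in Ioi (0:ℝ), Real.exp (-l * t) *
          (∫ r in (0:ℝ)..t, ∫ τ in Ioi (0:ℝ), u τ * G r τ) =
        K l * ∫ τ in Ioi (0:ℝ), Real.exp (-(τ * l * K l)) * u τ :=
  laplace_transform_primitive_subordinated_general K hK_pos G hG_meas hG_nonneg hG u hu_nonneg
    hu_int
end
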